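/- Let X = [0,1] ⊆ ℝ with the usual metric d(x,y) = |x − y|, regarded as a C*-algebra valued metric space over the C*-algebra ℝ. Define T : X → X by Tx = 0 for x ∈ [0,1) and T(1) = 1/2. Then for all x, y ∈ [0,1] and all n ≥ 1, |Tⁿx − Tⁿy| ≤ (1/2)ⁿ · (x + y) (so T is a C*-algebra valued Ćirić-type1 contractive mapping with q(x,y) = 1/√2 and δ(x,y) = x + y), but T is not a contraction: there is no constant k with 0 ≤ k < 1 such that |Tx − Ty| ≤ k·|x − y| for all x, y ∈ [0,1]. -/
import Mathlib


/-- The map on [0,1] sending every x < 1 to 0 and 1 to 1/2. -/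
noncomputable def T15 : unitInterval → unitInterval :=
  fun x => if (x : ℝ) = 1 then ⟨1 / 2, by norm_num⟩ else 0

lemma T15_apply_ne (y : unitInterval) (h : (y : ℝ) ≠ 1) : T15 y = 0 := by
  unfold T15; rw [if_neg h]

lemma T15_apply_one (y : unitInterval) (h : (y : ℝ) = 1) :
    (T15 y : ℝ) = 1 / 2 := by
  unfold T15; rw [if_pos h]

lemma T15_val (x : unitInterval) :
    (T15 x : ℝ) = 0 ∨ (T15 x : ℝ) = 1 / 2 := by
  unfold T15
  split <;> simp

lemma T15_T15 (x : unitInterval) : T15 (T15 x) = 0 := by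
  apply T15_apply_ne
  rcases T15_val x with h | h <;> rw [h] <;> norm_num

lemma T15_zero (k : ℕ) : T15^[k] 0 = 0 := by
  induction k with
  | zero => rfl
  | succ m ih =>
    rw [Function.iterate_succ_apply, T15_apply_ne 0 (by norm_num), ih]

lemma T15_iter_two (x : unitInterval) (n : ℕ) (hn : 2 ≤ n) :
    T15^[n] x = 0 := by
  obtain ⟨m, rfl⟩ := Nat.exists_eq_add_of_le hn
  rw [show 2 + m = m + 1 + 1 by ring, Function.iterate_succ_apply,
    Function.iterate_succ_apply, T15_T15, T15_zero]

theorem T15_ciric1_not_contraction :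
    (∀ x y : unitInterval, ∀ n : ℕ, 1 ≤ n →
      |(T15^[n] x : ℝ) - (T15^[n] y : ℝ)| ≤ (1 / 2) ^ n * ((x : ℝ) + (y : ℝ))) ∧
    ¬ ∃ k : ℝ, 0 ≤ k ∧ k < 1 ∧
      ∀ x y : unitInterval, |(T15 x : ℝ) - (T15 y : ℝ)| ≤ k * |(x : ℝ) - (y : ℝ)| := by
  constructor
  · intro x y n hn
    have hx0 := x.2.1
    have hy0 := y.2.1
    rcases eq_or_lt_of_le hn with h1 | h2
    · -- n = 1
      rw [← h1]
      simp only [Function.iterate_one, pow_one]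
      by_cases hx : (x : ℝ) = 1 <;> by_cases hy : (y : ℝ) = 1
      · rw [T15_apply_one x hx, T15_apply_one y hy, hx, hy]; norm_num
      · rw [T15_apply_one x hx, T15_apply_ne y hy, hx]
        rw [show ((0 : unitInterval) : ℝ) = 0 from rfl]
        rw [abs_of_nonneg (by norm_num)]
        linarith
      · rw [T15_apply_ne x hx, T15_apply_one y hy, hy]
        rw [show ((0 : unitInterval) : ℝ) = 0 from rfl]
        rw [abs_of_nonpos (by norm_num)]
        linarith
      · rw [T15_apply_ne x hx, T15_apply_ne y hy]
        simp
        positivity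
    · have h2' : 2 ≤ n := h2
      rw [T15_iter_two x n h2', T15_iter_two y n h2']
      have : (0 : ℝ) ≤ (1/2)^n * ((x:ℝ) + y) := by positivity
      simpa using this
  · rintro ⟨k, hk0, hk1, hk⟩
    have h := hk 1 ⟨1/2, by norm_num⟩
    have hT1 : (T15 1 : ℝ) = 1/2 := T15_apply_one 1 (by norm_num)
    have hT2 : T15 ⟨1/2, by norm_num⟩ = 0 := T15_apply_ne _ (by norm_num)
    rw [hT1, hT2] at h
    simp only [Set.Icc.coe_one] at h
    norm_num at h
    linarith
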